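/- arXiv:1812.08373 — 2 statements merged into one kernel-verified Lean document; each statement's English description precedes it below -/
import Mathlib

section
/- Let Ψ ∈ ℝ^{n×k} and Φ ∈ ℝ^{n×k} both have full column rank, and suppose Φ⁺ = (ΨᵀΦ)⁻¹ Ψᵀ (in particular ΨᵀΦ is invertible). Then the ranges of Ψ and Φ coincide: Ran(Ψ) = Ran(Φ). -/
/-!
Multiplying `Φ⁺ = (ΨᵀΦ)⁻¹Ψᵀ` on the left by `ΨᵀΦ` gives `Ψᵀ = ΨᵀΦ Φ⁺`, whose transpose
exhibits `Ψ` as `Φ` times a square matrix, so `Ran Ψ ⊆ Ran Φ`. Equality follows by counting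
dimensions: `rank Φ ≤ k = rank (ΨᵀΦ) ≤ rank Ψ`.
-/

open Matrix

namespace Matrix

variable {m n o K : Type*} [Fintype n] [Field K]

theorem range_mulVecLin_le_of_mul_eq [Fintype o] {A : Matrix m n K} {B : Matrix m o K}
    {C : Matrix n o K} (h : A * C = B) :
    LinearMap.range B.mulVecLin ≤ LinearMap.range A.mulVecLin := by
  rw [← h, mulVecLin_mul]
  exact LinearMap.range_comp_le_range _ _

variable [Fintype m] [DecidableEq n]

theorem rank_le_rank_of_isUnit_det_transpose_mul {Ψ Φ : Matrix m n K}
    (h : IsUnit (Ψᵀ * Φ).det) : Φ.rank ≤ Ψ.rank :=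
  calc Φ.rank ≤ Fintype.card n := Φ.rank_le_card_width
    _ = (Ψᵀ * Φ).rank := (rank_of_isUnit _ ((isUnit_iff_isUnit_det _).mpr h)).symm
    _ ≤ Ψᵀ.rank := rank_mul_le_left _ _
    _ = Ψ.rank := rank_transpose Ψ

theorem mul_transpose_eq_of_mul_transpose_eq_inv_mul {Ψ Φ : Matrix m n K} {G : Matrix n n K}
    (h : IsUnit (Ψᵀ * Φ).det) (hG : G * Φᵀ = (Ψᵀ * Φ)⁻¹ * Ψᵀ) :
    Φ * (Ψᵀ * Φ * G)ᵀ = Ψ := by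
  apply transpose_injective
  rw [transpose_mul, transpose_transpose, Matrix.mul_assoc, hG, ← Matrix.mul_assoc,
    mul_nonsing_inv _ h, Matrix.one_mul]

end Matrix

theorem ranges_coincide_general {n k : ℕ} (Ψ Φ : Matrix (Fin n) (Fin k) ℝ)
    (hinv : IsUnit (Ψᵀ * Φ).det)
    (hcond : (Φᵀ * Φ)⁻¹ * Φᵀ = (Ψᵀ * Φ)⁻¹ * Ψᵀ) :
    LinearMap.range Ψ.mulVecLin = LinearMap.range Φ.mulVecLin :=
  Submodule.eq_of_le_of_finrank_le
    (range_mulVecLin_le_of_mul_eq (mul_transpose_eq_of_mul_transpose_eq_inv_mul hinv hcond))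
    (rank_le_rank_of_isUnit_det_transpose_mul hinv)

/-- If `Ψ, Φ ∈ ℝ^{n×k}` both have full column rank, `ΨᵀΦ` is invertible,
and `Φ⁺ = (ΨᵀΦ)⁻¹ Ψᵀ`, then `Ran(Ψ) = Ran(Φ)`. -/
theorem ranges_coincide {n k : ℕ} (Ψ Φ : Matrix (Fin n) (Fin k) ℝ)
    (hΨ : Ψ.rank = k) (hΦ : Φ.rank = k)
    (hinv : IsUnit (Ψᵀ * Φ).det)
    (hcond : (Φᵀ * Φ)⁻¹ * Φᵀ = (Ψᵀ * Φ)⁻¹ * Ψᵀ) :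
    LinearMap.range Ψ.mulVecLin = LinearMap.range Φ.mulVecLin :=
  ranges_coincide_general Ψ Φ hinv hcond
end

section
/- Let f : ℝⁿ → ℝⁿ be Lipschitz with constant κ > 0, let k ∈ ℕ, coefficients α₀,…,α_k, β₀,…,β_k ∈ ℝ, and Δt > 0 with Δt·|β₀|·κ < |α₀|. Define for sequences (x_j)_{j=0}^{k} and (y_j)_{j=0}^{k} in ℝⁿ the residual difference r := α₀(x₀ − y₀) − Δt·β₀(f(x₀) − f(y₀)) + Σ_{j=1}^{k} α_j(x_j − y_j) − Δt·Σ_{j=1}^{k} β_j(f(x_j) − f(y_j)). Then ‖x₀ − y₀‖ ≤ (1/h)·‖r‖ + Σ_{j=1}^{k} γ_j·‖x_j − y_j‖, where h := |α₀| − |β₀|·κ·Δt and γ_j := (|α_j| + |β_j|·κ·Δt)/h. -/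
open Finset

/-- Core inequality of the a posteriori error bound (Theorem 4.4). -/
theorem multistep_error_bound {n : ℕ} (f : EuclideanSpace ℝ (Fin n) → EuclideanSpace ℝ (Fin n))
    (κ : ℝ) (hκ : 0 < κ) (hf : ∀ x y, ‖f x - f y‖ ≤ κ * ‖x - y‖)
    (k : ℕ) (α β : ℕ → ℝ) (Δt : ℝ) (hΔt : 0 < Δt)
    (hstep : Δt * |β 0| * κ < |α 0|)
    (x y : ℕ → EuclideanSpace ℝ (Fin n))
    (r : EuclideanSpace ℝ (Fin n))
    (hr : r = α 0 • (x 0 - y 0) - (Δt * β 0) • (f (x 0) - f (y 0))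
        + ∑ j ∈ Finset.Icc 1 k, (α j • (x j - y j))
        - Δt • ∑ j ∈ Finset.Icc 1 k, (β j • (f (x j) - f (y j)))) :
    ‖x 0 - y 0‖ ≤ (1 / (|α 0| - |β 0| * κ * Δt)) * ‖r‖
      + ∑ j ∈ Finset.Icc 1 k,
          ((|α j| + |β j| * κ * Δt) / (|α 0| - |β 0| * κ * Δt)) * ‖x j - y j‖ := by
  set h := |α 0| - |β 0| * κ * Δt with hh
  have hh0 : 0 < h := by have := hstep; simp only [hh]; nlinarith
  have hA : α 0 • (x 0 - y 0)
      = r + (Δt * β 0) • (f (x 0) - f (y 0))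
        - ∑ j ∈ Finset.Icc 1 k, (α j • (x j - y j))
        + Δt • ∑ j ∈ Finset.Icc 1 k, (β j • (f (x j) - f (y j))) := by
    rw [hr]; abel
  have hS1 : ‖∑ j ∈ Finset.Icc 1 k, (α j • (x j - y j))‖
      ≤ ∑ j ∈ Finset.Icc 1 k, |α j| * ‖x j - y j‖ := by
    refine (norm_sum_le _ _).trans (Finset.sum_le_sum fun j _ => ?_)
    rw [norm_smul, Real.norm_eq_abs]
  have hS2 : ‖∑ j ∈ Finset.Icc 1 k, (β j • (f (x j) - f (y j)))‖
      ≤ ∑ j ∈ Finset.Icc 1 k, |β j| * (κ * ‖x j - y j‖) := by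
    refine (norm_sum_le _ _).trans (Finset.sum_le_sum fun j _ => ?_)
    rw [norm_smul, Real.norm_eq_abs]
    exact mul_le_mul_of_nonneg_left (hf _ _) (abs_nonneg _)
  have hB : ‖(Δt * β 0) • (f (x 0) - f (y 0))‖ ≤ Δt * |β 0| * (κ * ‖x 0 - y 0‖) := by
    rw [norm_smul, Real.norm_eq_abs, abs_mul, abs_of_pos hΔt]
    exact mul_le_mul_of_nonneg_left (hf _ _) (by positivity)
  have key : |α 0| * ‖x 0 - y 0‖
      ≤ ‖r‖ + Δt * |β 0| * κ * ‖x 0 - y 0‖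
        + ∑ j ∈ Finset.Icc 1 k, (|α j| + |β j| * κ * Δt) * ‖x j - y j‖ := by
    have h1 : |α 0| * ‖x 0 - y 0‖ = ‖α 0 • (x 0 - y 0)‖ := by
      rw [norm_smul, Real.norm_eq_abs]
    rw [h1, hA]
    have h2 : ‖r + (Δt * β 0) • (f (x 0) - f (y 0))
        - ∑ j ∈ Finset.Icc 1 k, (α j • (x j - y j))
        + Δt • ∑ j ∈ Finset.Icc 1 k, (β j • (f (x j) - f (y j)))‖
        ≤ ‖r‖ + ‖(Δt * β 0) • (f (x 0) - f (y 0))‖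
          + ‖∑ j ∈ Finset.Icc 1 k, (α j • (x j - y j))‖
          + Δt * ‖∑ j ∈ Finset.Icc 1 k, (β j • (f (x j) - f (y j)))‖ := by
      calc _ ≤ ‖r + (Δt * β 0) • (f (x 0) - f (y 0))
              - ∑ j ∈ Finset.Icc 1 k, (α j • (x j - y j))‖
              + ‖Δt • ∑ j ∈ Finset.Icc 1 k, (β j • (f (x j) - f (y j)))‖ :=
            norm_add_le _ _
        _ ≤ _ := by
            rw [norm_smul, Real.norm_eq_abs, abs_of_pos hΔt]
            gcongr
            exact (norm_sub_le _ _).trans (by gcongr; exact norm_add_le _ _)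
    refine h2.trans ?_
    have h3 : Δt * ‖∑ j ∈ Finset.Icc 1 k, (β j • (f (x j) - f (y j)))‖
        ≤ Δt * ∑ j ∈ Finset.Icc 1 k, |β j| * (κ * ‖x j - y j‖) := by
      exact mul_le_mul_of_nonneg_left hS2 hΔt.le
    have h4 := hB
    have h5 := hS1
    have heq : ∑ j ∈ Finset.Icc 1 k, (|α j| + |β j| * κ * Δt) * ‖x j - y j‖
        = (∑ j ∈ Finset.Icc 1 k, |α j| * ‖x j - y j‖)
          + Δt * ∑ j ∈ Finset.Icc 1 k, |β j| * (κ * ‖x j - y j‖) := by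
      rw [Finset.mul_sum, ← Finset.sum_add_distrib]
      exact Finset.sum_congr rfl fun j _ => by ring
    rw [heq]; linarith
  have hsum : ∑ j ∈ Finset.Icc 1 k, ((|α j| + |β j| * κ * Δt) / h) * ‖x j - y j‖
      = (1 / h) * ∑ j ∈ Finset.Icc 1 k, (|α j| + |β j| * κ * Δt) * ‖x j - y j‖ := by
    rw [Finset.mul_sum]
    exact Finset.sum_congr rfl fun j _ => by ring
  rw [hsum, ← mul_add]
  have : h * ‖x 0 - y 0‖ ≤ ‖r‖ + ∑ j ∈ Finset.Icc 1 k, (|α j| + |β j| * κ * Δt) * ‖x j - y j‖ := by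
    simp only [hh]; nlinarith
  calc ‖x 0 - y 0‖ = (1 / h) * (h * ‖x 0 - y 0‖) := by field_simp
    _ ≤ _ := by apply mul_le_mul_of_nonneg_left this; positivity
end
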